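/- arXiv:2303.11246 — 2 statements merged into one kernel-verified Lean document; each statement's English description precedes it below -/
import Mathlib

section
/- Let h : X → Y be a surjective p-morphism between Esakia spaces. Then the preimage map V ↦ h⁻¹(V), defined on regular clopen upsets of Y, takes values in the regular clopen upsets of X and is a bijection onto them if and only if the restriction of h to the set M_X of maximal elements of X is injective. -/
/-- The downward closure of a set in a preorder. -/
def dwn {X : Type*} [Preorder X] (U : Set X) : Set X := {x | ∃ y ∈ U, x ≤ y}

/-- `pstar U = (U↓)ᶜ`. -/
def pstar {X : Type*} [Preorder X] (U : Set X) : Set X := (dwn U)ᶜ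

/-- Esakia space: compact, Priestley separation, downsets of clopens are clopen. -/
def IsEsakia (X : Type*) [TopologicalSpace X] [PartialOrder X] : Prop :=
  CompactSpace X ∧
    (∀ x y : X, ¬x ≤ y → ∃ U : Set X, IsClopen U ∧ IsUpperSet U ∧ x ∈ U ∧ y ∉ U) ∧
    (∀ U : Set X, IsClopen U → IsClopen (dwn U))

/-- Regular clopen upset: clopen, an upset, and `U = U**`. -/
def IsRCU {X : Type*} [TopologicalSpace X] [PartialOrder X] (U : Set X) : Prop :=
  IsClopen U ∧ IsUpperSet U ∧ U = pstar (pstar U)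

/-- The set of maximal elements of `X`. -/
def maxSet (X : Type*) [Preorder X] : Set X := {m | ∀ y, m ≤ y → y = m}

/-- A p-morphism of Esakia spaces: continuous, monotone, with the back condition. -/
def IsPMorphism {X Y : Type*} [TopologicalSpace X] [Preorder X]
    [TopologicalSpace Y] [Preorder Y] (f : X → Y) : Prop :=
  Continuous f ∧ Monotone f ∧ ∀ (x : X) (y' : Y), f x ≤ y' → ∃ y, x ≤ y ∧ f y = y'

section Aux

variable {X : Type*} [Preorder X]

lemma isUpperSet_pstar (U : Set X) : IsUpperSet (pstar U) := by
  intro a b hab ha hb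
  exact ha (by rcases hb with ⟨u, hu, hbu⟩; exact ⟨u, hu, hab.trans hbu⟩)

lemma subset_pstar_pstar {U : Set X} (hU : IsUpperSet U) : U ⊆ pstar (pstar U) := by
  intro x hx ⟨a, ha, hxa⟩
  exact ha ⟨a, hU hxa hx, le_refl a⟩

lemma pstar_anti {U W : Set X} (hUW : U ⊆ W) : pstar W ⊆ pstar U := by
  intro x hx ⟨a, ha, hxa⟩
  exact hx ⟨a, hUW ha, hxa⟩

end Aux

section AuxTop

variable {X : Type*} [TopologicalSpace X] [PartialOrder X]

lemma isClopen_pstar (hX : IsEsakia X) {U : Set X} (hU : IsClopen U) : IsClopen (pstar U) :=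
  (hX.2.2 U hU).compl

lemma isClosed_Ici_esakia (hX : IsEsakia X) (x : X) : IsClosed (Set.Ici x) := by
  rw [← isOpen_compl_iff]
  rw [isOpen_iff_forall_mem_open]
  intro y hy
  obtain ⟨U, hUc, hUup, hxU, hyU⟩ := hX.2.1 x y hy
  refine ⟨Uᶜ, ?_, hUc.compl.isOpen, hyU⟩
  intro z hz hz'
  exact hz (hUup hz' hxU)

/-- In an Esakia space, every point lies below a maximal point. -/
lemma exists_max_above (hX : IsEsakia X) (x : X) : ∃ m ∈ maxSet X, x ≤ m := by
  haveI : CompactSpace X := hX.1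
  have ih : ∀ c ⊆ Set.Ici x, IsChain (· ≤ ·) c → ∀ y ∈ c, ∃ ub, ∀ z ∈ c, z ≤ ub := by
    intro c hc hchain y hy
    haveI : Nonempty c := ⟨⟨y, hy⟩⟩
    have hne : (⋂ z : c, Set.Ici (z : X)).Nonempty := by
      apply IsCompact.nonempty_iInter_of_directed_nonempty_isCompact_isClosed
      · rintro ⟨a, ha⟩ ⟨b, hb⟩
        rcases hchain.total ha hb with hab | hba
        · exact ⟨⟨b, hb⟩, fun t ht => hab.trans ht, fun t ht => ht⟩
        · exact ⟨⟨a, ha⟩, fun t ht => ht, fun t ht => hba.trans ht⟩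
      · exact fun z => ⟨z, le_refl _⟩
      · exact fun z => (isClosed_Ici_esakia hX _).isCompact
      · exact fun z => isClosed_Ici_esakia hX _
    obtain ⟨ub, hub⟩ := hne
    exact ⟨ub, fun z hz => Set.mem_iInter.1 hub ⟨z, hz⟩⟩
  obtain ⟨m, hxm, hm⟩ := zorn_le_nonempty_Ici₀ x ih x le_rfl
  exact ⟨m, fun z hz => le_antisymm (hm hz) hz, hxm⟩

lemma t2_of_esakia (hX : IsEsakia X) : T2Space X := by
  constructor
  intro a b hab
  rcases (not_and_or.1 fun hc : a ≤ b ∧ b ≤ a => hab (le_antisymm hc.1 hc.2)) with hle | hle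
  · obtain ⟨U, hUc, _, haU, hbU⟩ := hX.2.1 a b hle
    exact ⟨U, Uᶜ, hUc.isOpen, hUc.compl.isOpen, haU, hbU, disjoint_compl_right⟩
  · obtain ⟨U, hUc, _, hbU, haU⟩ := hX.2.1 b a hle
    exact ⟨Uᶜ, U, hUc.compl.isOpen, hUc.isOpen, haU, hbU, disjoint_compl_left⟩

end AuxTop

section AuxPM

variable {X Y : Type*} [TopologicalSpace X] [PartialOrder X]
  [TopologicalSpace Y] [PartialOrder Y]

lemma dwn_preimage {h : X → Y} (hpm : IsPMorphism h) (V : Set Y) :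
    dwn (h ⁻¹' V) = h ⁻¹' (dwn V) := by
  ext x
  constructor
  · rintro ⟨y, hy, hxy⟩
    exact ⟨h y, hy, hpm.2.1 hxy⟩
  · rintro ⟨v, hv, hxv⟩
    obtain ⟨y, hxy, hyv⟩ := hpm.2.2 x v hxv
    exact ⟨y, by rw [Set.mem_preimage, hyv]; exact hv, hxy⟩

lemma pstar_preimage {h : X → Y} (hpm : IsPMorphism h) (V : Set Y) :
    pstar (h ⁻¹' V) = h ⁻¹' (pstar V) := by
  unfold pstar
  rw [dwn_preimage hpm, Set.preimage_compl]

lemma image_max {h : X → Y} (hpm : IsPMorphism h) {m : X} (hm : m ∈ maxSet X) :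
    h m ∈ maxSet Y := by
  intro y hy
  obtain ⟨z, hmz, hz⟩ := hpm.2.2 m y hy
  rw [← hz, hm z hmz]

end AuxPM

/-- for a surjective p-morphism `h : X → Y` of Esakia spaces, the
preimage map on regular clopen upsets of `Y` lands in the regular clopen upsets
of `X` and is a bijection onto them iff `h` is injective on maximal elements. -/
theorem stmt3 {X Y : Type*} [TopologicalSpace X] [PartialOrder X]
    [TopologicalSpace Y] [PartialOrder Y] (hX : IsEsakia X) (hY : IsEsakia Y)
    (h : X → Y) (hpm : IsPMorphism h) (hsurj : Function.Surjective h) :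
    ((∀ V : Set Y, IsRCU V → IsRCU (h ⁻¹' V)) ∧
      Set.BijOn (fun V : Set Y => h ⁻¹' V) {V | IsRCU V} {U | IsRCU U}) ↔
    Set.InjOn h (maxSet X) := by
  haveI : CompactSpace X := hX.1
  haveI : T2Space Y := t2_of_esakia hY
  constructor
  · -- bijection ⇒ injective on maximal elements
    rintro ⟨-, hbij⟩ m₁ hm₁ m₂ hm₂ heq
    by_contra hne
    have hle : ¬ m₁ ≤ m₂ := fun hle => hne (hm₁ m₂ hle).symm
    obtain ⟨U, hUc, hUup, h1U, h2U⟩ := hX.2.1 m₁ m₂ hle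
    set U' : Set X := pstar (pstar U) with hU'
    have hU'rcu : IsRCU U' := by
      refine ⟨isClopen_pstar hX (isClopen_pstar hX hUc), isUpperSet_pstar _, ?_⟩
      apply Set.Subset.antisymm (subset_pstar_pstar (isUpperSet_pstar _))
      exact pstar_anti (subset_pstar_pstar (isUpperSet_pstar U))
    obtain ⟨V, hV, hVU⟩ := hbij.2.2 hU'rcu
    simp only at hVU
    have h1 : m₁ ∈ U' := subset_pstar_pstar (U := U) hUup h1U
    have h2 : m₂ ∉ U' := by
      intro hmem
      exact hmem ⟨m₂, fun ⟨u, hu, h2u⟩ => h2U (hm₂ u h2u ▸ hu), le_refl m₂⟩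
    rw [← hVU] at h1 h2
    exact h2 (show h m₂ ∈ V from heq ▸ h1)
  · -- injective on maximal elements ⇒ bijection
    intro hinj
    have hpre : ∀ V : Set Y, IsRCU V → IsRCU (h ⁻¹' V) := by
      rintro V ⟨hVc, hVup, hVr⟩
      refine ⟨⟨hVc.1.preimage hpm.1, hVc.2.preimage hpm.1⟩,
        fun a b hab ha => hVup (hpm.2.1 hab) ha, ?_⟩
      rw [pstar_preimage hpm, pstar_preimage hpm, ← hVr]
    refine ⟨hpre, hpre, ?_, ?_⟩
    · -- injectivity of the preimage map
      intro V₁ _ V₂ _ hp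
      simp only at hp
      rw [← Set.image_preimage_eq V₁ hsurj, ← Set.image_preimage_eq V₂ hsurj, hp]
    · -- surjectivity onto RCUs of X
      rintro U ⟨hUc, hUup, hUr⟩
      set V : Set Y := pstar (h '' (pstar U)) with hVdef
      have key : h ⁻¹' V = U := by
        ext x
        constructor
        · -- h⁻¹ V ⊆ U
          intro hx
          rw [hUr]
          intro ⟨a, ha, hxa⟩
          obtain ⟨m, hmmax, ham⟩ := exists_max_above hX a
          have hmU : m ∉ U := fun hmU => ha ⟨m, hmU, ham⟩
          have hmstar : m ∈ pstar U := by
            rintro ⟨u, hu, hmu⟩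
            exact hmU (hmmax u hmu ▸ hu)
          exact hx ⟨h m, ⟨m, hmstar, rfl⟩, hpm.2.1 (hxa.trans ham)⟩
        · -- U ⊆ h⁻¹ V
          intro hx hmem
          obtain ⟨y, ⟨a, ha, rfl⟩, hxy⟩ := hmem
          obtain ⟨z, hxz, hz⟩ := hpm.2.2 x (h a) hxy
          have hzU : z ∈ U := hUup hxz hx
          obtain ⟨m, hmmax, ham⟩ := exists_max_above hX a
          have : h z ≤ h m := hz ▸ hpm.2.1 ham
          obtain ⟨w, hzw, hw⟩ := hpm.2.2 z (h m) this
          obtain ⟨w', hw'max, hww'⟩ := exists_max_above hX w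
          have hhm : h m ∈ maxSet Y := image_max hpm hmmax
          have hw'm : h w' = h m := hhm (h w') (hw ▸ hpm.2.1 hww')
          have : w' = m := hinj hw'max hmmax hw'm
          have hmU : m ∈ U := this ▸ hUup (hzw.trans hww') hzU
          exact ha ⟨m, hmU, ham⟩
      refine ⟨V, ⟨⟨?_, ?_⟩, isUpperSet_pstar _, ?_⟩, key⟩
      · -- V is closed: V = h '' U, image of a compact set
        have : V = h '' U := by rw [← key, Set.image_preimage_eq V hsurj]
        rw [this]
        exact ((hUc.1.isCompact).image hpm.1).isClosed
      · -- V is open: Vᶜ = h '' Uᶜ is closed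
        rw [← isClosed_compl_iff]
        have : Vᶜ = h '' Uᶜ := by
          rw [← key, ← Set.preimage_compl, Set.image_preimage_eq Vᶜ hsurj]
        rw [this]
        exact ((hUc.compl.1.isCompact).image hpm.1).isClosed
      · -- V = V**
        have : h ⁻¹' (pstar (pstar V)) = h ⁻¹' V := by
          rw [← pstar_preimage hpm, ← pstar_preimage hpm, key, ← hUr]
        exact (Set.preimage_injective.2 hsurj this).symm
end

section
/- Let F be a finite poset and R the collection of its regular upsets. For all x, y ∈ F the following are equivalent: (i) x ∼∞ y, i.e. x ∼ₙ y for all n ∈ ℕ; (ii) for every U in the Heyting closure ⟨R⟩, x ∈ U ⟺ y ∈ U. -/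
/-- Heyting implication of upsets: `U ⇨ V := ((U \ V)↓)ᶜ`. -/
def heyImp {X : Type*} [Preorder X] (U V : Set X) : Set X := (dwn (U \ V))ᶜ

/-- The regular upsets of a poset: upsets `U` with `U = U**`. -/
def regUps (F : Type*) [Preorder F] : Set (Set F) :=
  {U | IsUpperSet U ∧ U = pstar (pstar U)}

/-- `Mset x` is the set of maximal elements above `x`. -/
def Mset {X : Type*} [Preorder X] (x : X) : Set X :=
  {m | x ≤ m ∧ ∀ y, m ≤ y → y = m}

/-- The bounded bisimulation relations `∼ₙ`. -/
def simN {X : Type*} [Preorder X] : ℕ → X → X → Prop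
  | 0, x, y => Mset x = Mset y
  | n + 1, x, y =>
      (∀ z, x ≤ z → ∃ w, y ≤ w ∧ simN n z w) ∧
      (∀ w, y ≤ w → ∃ z, x ≤ z ∧ simN n z w)

/-- `x ∼∞ y` iff `x ∼ₙ y` for all `n`. -/
def simInf {X : Type*} [Preorder X] (x y : X) : Prop := ∀ n : ℕ, simN n x y

/-- The Heyting closure of a collection `R` of sets: the least collection
containing `R`, `∅` and the whole carrier, closed under `∩`, `∪` and `⇨`. -/
inductive HClos {X : Type*} [Preorder X] (R : Set (Set X)) : Set X → Prop
  | base : ∀ U ∈ R, HClos R U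
  | bot : HClos R ∅
  | top : HClos R Set.univ
  | inter : ∀ {U V}, HClos R U → HClos R V → HClos R (U ∩ V)
  | union : ∀ {U V}, HClos R U → HClos R V → HClos R (U ∪ V)
  | imp : ∀ {U V}, HClos R U → HClos R V → HClos R (heyImp U V)

section Aux

variable {F : Type*} [PartialOrder F]

lemma mset_of_maximal {m : F} (hm : ∀ y, m ≤ y → y = m) : Mset m = {m} := by
  ext k
  simp only [Mset, Set.mem_setOf_eq, Set.mem_singleton_iff]
  constructor
  · rintro ⟨h1, _⟩; exact hm k h1
  · rintro rfl; exact ⟨le_refl _, hm⟩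

lemma exists_maximal_ge [Fintype F] (y : F) : ∃ m, m ∈ Mset y := by
  obtain ⟨b, hb, hbm⟩ := Finite.exists_le_maximal (p := fun _ : F => True) trivial
  exact ⟨b, hb, fun c hc => le_antisymm (hbm.2 trivial hc) hc⟩

lemma simN_refl : ∀ (n : ℕ) (x : F), simN n x x := by
  intro n
  induction n with
  | zero => intro x; rfl
  | succ k ih =>
      intro x
      exact ⟨fun z hz => ⟨z, hz, ih z⟩, fun z hz => ⟨z, hz, ih z⟩⟩

lemma simN_symm : ∀ (n : ℕ) (x y : F), simN n x y → simN n y x := by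
  intro n
  induction n with
  | zero => intro x y h; exact h.symm
  | succ k ih =>
      intro x y h
      refine ⟨fun z hz => ?_, fun w hw => ?_⟩
      · obtain ⟨z', hz', hs⟩ := h.2 z hz
        exact ⟨z', hz', ih _ _ hs⟩
      · obtain ⟨w', hw', hs⟩ := h.1 w hw
        exact ⟨w', hw', ih _ _ hs⟩

lemma simN_of_succ : ∀ (n : ℕ) (x y : F), simN (n + 1) x y → simN n x y := by
  intro n
  induction n with
  | zero =>
      intro x y h
      ext m
      constructor
      · intro hm
        obtain ⟨w, hw, hs⟩ := h.1 m hm.1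
        have hmm : Mset m = {m} := mset_of_maximal hm.2
        have : (m : F) ∈ Mset w := by
          have : Mset w = {m} := by rw [← hs, hmm]
          rw [this]; rfl
        exact ⟨le_trans hw this.1, hm.2⟩
      · intro hm
        obtain ⟨w, hw, hs⟩ := h.2 m hm.1
        have hmm : Mset m = {m} := mset_of_maximal hm.2
        have : (m : F) ∈ Mset w := by
          have : Mset w = {m} := by rw [hs, hmm]
          rw [this]; rfl
        exact ⟨le_trans hw this.1, hm.2⟩
  | succ k ih =>
      intro x y h
      refine ⟨fun z hz => ?_, fun w hw => ?_⟩
      · obtain ⟨w, hw, hs⟩ := h.1 z hz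
        exact ⟨w, hw, ih _ _ hs⟩
      · obtain ⟨z, hz, hs⟩ := h.2 w hw
        exact ⟨z, hz, ih _ _ hs⟩

lemma pstar_pstar_eq [Fintype F] {U : Set F} (hU : IsUpperSet U) :
    pstar (pstar U) = {a | Mset a ⊆ U} := by
  ext a
  simp only [pstar, dwn, Set.mem_compl_iff, Set.mem_setOf_eq]
  constructor
  · intro h m hm
    by_contra hmU
    exact h ⟨m, fun ⟨u, huU, hmu⟩ => hmU (hm.2 u hmu ▸ huU), hm.1⟩
  · rintro h ⟨b, hb, hab⟩
    obtain ⟨m, hm⟩ := exists_maximal_ge b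
    exact hb ⟨m, h ⟨le_trans hab hm.1, hm.2⟩, hm.1⟩

/-- Pigeonhole over a finite poset: extract a single witness for all `n`. -/
lemma exists_forall_of_forall_exists [Fintype F] (a : F) (P : ℕ → F → Prop)
    (anti : ∀ n c, P (n + 1) c → P n c) (h : ∀ n, ∃ c, a ≤ c ∧ P n c) :
    ∃ c, a ≤ c ∧ ∀ n, P n c := by
  have mono : ∀ n m c, m ≤ n → P n c → P m c := by
    intro n
    induction n with
    | zero =>
        intro m c hm hp
        have : m = 0 := Nat.le_zero.mp hm
        rw [this]; exact hp
    | succ k ih =>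
        intro m c hm hp
        rcases Nat.lt_or_ge m (k + 1) with h' | h'
        · exact ih m c (Nat.lt_succ_iff.mp h') (anti k c hp)
        · have : m = k + 1 := le_antisymm hm h'
          rw [this]; exact hp
  by_contra hcon
  push_neg at hcon
  have hch : ∀ c : F, ∃ n, a ≤ c → ¬ P n c := by
    intro c
    by_cases hac : a ≤ c
    · obtain ⟨n, hn⟩ := hcon c hac
      exact ⟨n, fun _ => hn⟩
    · exact ⟨0, fun h' => absurd h' hac⟩
  choose g hg using hch
  obtain ⟨c, hac, hP⟩ := h (Finset.univ.sup g)
  exact hg c hac (mono _ _ _ (Finset.le_sup (Finset.mem_univ c)) hP)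

/-- Forward direction: every set in the Heyting closure of the regular upsets is
invariant under `simInf`. -/
lemma hclos_inv [Fintype F] {U : Set F} (h : HClos (regUps F) U) :
    ∀ a b : F, simInf a b → (a ∈ U ↔ b ∈ U) := by
  induction h with
  | base U hU =>
      obtain ⟨hup, heq⟩ := hU
      have key : ∀ c : F, c ∈ U ↔ Mset c ⊆ U := by
        intro c
        have h2 : pstar (pstar U) = {a | Mset a ⊆ U} := pstar_pstar_eq hup
        constructor
        · intro hc; rw [heq, h2] at hc; exact hc
        · intro hc; rw [heq, h2]; exact hc
      intro a b hs
      have h0 : Mset a = Mset b := hs 0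
      rw [key a, key b, h0]
  | bot => intro a b _; simp
  | top => intro a b _; simp
  | inter h1 h2 ih1 ih2 =>
      intro a b hs
      simp only [Set.mem_inter_iff, ih1 a b hs, ih2 a b hs]
  | union h1 h2 ih1 ih2 =>
      intro a b hs
      simp only [Set.mem_union, ih1 a b hs, ih2 a b hs]
  | @imp U V h1 h2 ih1 ih2 =>
      have key : ∀ a b : F, simInf a b → a ∈ heyImp U V → b ∈ heyImp U V := by
        intro a b hs ha
        rintro ⟨u, ⟨huU, huV⟩, hbu⟩
        have hsba : simInf b a := fun n => simN_symm n a b (hs n)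
        have hex : ∀ n, ∃ c, a ≤ c ∧ simN n u c := by
          intro n
          obtain ⟨c, hac, hsc⟩ := (hsba (n + 1)).1 u hbu
          exact ⟨c, hac, hsc⟩
        obtain ⟨c, hac, hsc⟩ :=
          exists_forall_of_forall_exists a (fun n c => simN n u c)
            (fun n c hp => simN_of_succ n u c hp) hex
        have hcU : c ∈ U := (ih1 u c hsc).mp huU
        have hcV : c ∉ V := fun hv => huV ((ih2 u c hsc).mpr hv)
        exact ha ⟨c, ⟨hcU, hcV⟩, hac⟩
      intro a b hs
      exact ⟨key a b hs, key b a (fun n => simN_symm n a b (hs n))⟩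

lemma hclos_biInter [Fintype F] (s : Finset F) (f : F → Set F)
    (hf : ∀ w ∈ s, HClos (regUps F) (f w)) :
    HClos (regUps F) (⋂ w ∈ s, f w) := by
  classical
  induction s using Finset.induction with
  | empty => simpa using HClos.top
  | @insert a t ha ih =>
      rw [Finset.set_biInter_insert]
      exact HClos.inter (hf a (Finset.mem_insert_self a t))
        (ih fun w hw => hf w (Finset.mem_insert_of_mem hw))

lemma hclos_biUnion [Fintype F] (s : Finset F) (f : F → Set F)
    (hf : ∀ w ∈ s, HClos (regUps F) (f w)) :
    HClos (regUps F) (⋃ w ∈ s, f w) := by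
  classical
  induction s using Finset.induction with
  | empty => simpa using HClos.bot
  | @insert a t ha ih =>
      rw [Finset.set_biUnion_insert]
      exact HClos.union (hf a (Finset.mem_insert_self a t))
        (ih fun w hw => hf w (Finset.mem_insert_of_mem hw))

/-- Base separation: a maximal `m` above `x` but not above `y` yields a
regular upset containing `y` but not `x`. -/
lemma sep_zero [Fintype F] {x y m : F} (hmx : m ∈ Mset x) (hmy : m ∉ Mset y) :
    ∃ U : Set F, HClos (regUps F) U ∧ y ∈ U ∧ x ∉ U := by
  refine ⟨{w | m ∉ Mset w}, HClos.base _ ⟨?_, ?_⟩, hmy, fun h => h hmx⟩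
  · intro a b hab ha hmb
    exact ha ⟨le_trans hab hmb.1, hmb.2⟩
  · have hup : IsUpperSet {w : F | m ∉ Mset w} := by
      intro a b hab ha hmb
      exact ha ⟨le_trans hab hmb.1, hmb.2⟩
    rw [pstar_pstar_eq hup]
    ext a
    simp only [Set.mem_setOf_eq, Set.subset_def]
    constructor
    · intro h m' hm' hmm'
      have : Mset m' = {m'} := mset_of_maximal hm'.2
      rw [this] at hmm'
      exact h (hmm' ▸ hm')
    · intro h hma
      exact h m hma ⟨le_refl m, hma.2⟩

/-- Successor separation step. -/
lemma sep_step [Fintype F] (n : ℕ)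
    (ih : ∀ a b : F, ¬ simN n a b → ∃ U, HClos (regUps F) U ∧ ¬ (a ∈ U ↔ b ∈ U))
    (x y z : F) (hxz : x ≤ z) (hz : ∀ w, y ≤ w → ¬ simN n z w) :
    ∃ U : Set F, HClos (regUps F) U ∧ x ∉ U ∧ y ∈ U := by
  classical
  have hch : ∀ w : F, ∃ U : Set F, y ≤ w →
      HClos (regUps F) U ∧ ¬ (z ∈ U ↔ w ∈ U) := by
    intro w
    by_cases hyw : y ≤ w
    · obtain ⟨U, hU, hsep⟩ := ih z w (hz w hyw)
      exact ⟨U, fun _ => ⟨hU, hsep⟩⟩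
    · exact ⟨∅, fun h' => absurd h' hyw⟩
  choose Uf hUf using hch
  set s : Finset F := Finset.univ.filter (fun w => y ≤ w) with hs
  set V : Set F := ⋂ w ∈ s, (if z ∈ Uf w then Uf w else Set.univ) with hV
  set W : Set F := ⋃ w ∈ s, (if z ∈ Uf w then (∅ : Set F) else Uf w) with hW
  have hVclos : HClos (regUps F) V := by
    apply hclos_biInter
    intro w hw
    have hyw : y ≤ w := (Finset.mem_filter.mp hw).2
    split
    · exact (hUf w hyw).1
    · exact HClos.top
  have hWclos : HClos (regUps F) W := by
    apply hclos_biUnion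
    intro w hw
    have hyw : y ≤ w := (Finset.mem_filter.mp hw).2
    split
    · exact HClos.bot
    · exact (hUf w hyw).1
  have hzV : z ∈ V := by
    rw [hV]
    simp only [Set.mem_iInter]
    intro w hw
    split
    · assumption
    · trivial
  have hzW : z ∉ W := by
    rw [hW]
    simp only [Set.mem_iUnion]
    rintro ⟨w, hw, hmem⟩
    by_cases hzw : z ∈ Uf w
    · rw [if_pos hzw] at hmem; exact hmem
    · rw [if_neg hzw] at hmem; exact hzw hmem
  refine ⟨heyImp V W, HClos.imp hVclos hWclos, ?_, ?_⟩
  · intro h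
    exact h ⟨z, ⟨hzV, hzW⟩, hxz⟩
  · rintro ⟨u, ⟨huV, huW⟩, hyu⟩
    have hus : u ∈ s := Finset.mem_filter.mpr ⟨Finset.mem_univ u, hyu⟩
    have hsep := (hUf u hyu).2
    by_cases hzu : z ∈ Uf u
    · have huu : u ∉ Uf u := fun h' => hsep ⟨fun _ => h', fun _ => hzu⟩
      have : u ∈ (if z ∈ Uf u then Uf u else Set.univ) := by
        rw [hV] at huV
        exact Set.mem_iInter₂.mp huV u hus
      rw [if_pos hzu] at this
      exact huu this
    · have huu : u ∈ Uf u := by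
        by_contra h'
        exact hsep ⟨fun h'' => absurd h'' hzu, fun h'' => absurd h'' h'⟩
      apply huW
      rw [hW]
      refine Set.mem_iUnion₂.mpr ⟨u, hus, ?_⟩
      rw [if_neg hzu]
      exact huu

/-- Backward direction: non-`n`-similar points are separated by the closure. -/
lemma sep [Fintype F] : ∀ (n : ℕ) (x y : F), ¬ simN n x y →
    ∃ U : Set F, HClos (regUps F) U ∧ ¬ (x ∈ U ↔ y ∈ U) := by
  intro n
  induction n with
  | zero =>
      intro x y h
      have hne : ¬ (Mset x ⊆ Mset y ∧ Mset y ⊆ Mset x) :=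
        fun ⟨h1, h2⟩ => h (subset_antisymm h1 h2)
      rcases not_and_or.mp hne with h' | h'
      · obtain ⟨m, hmx, hmy⟩ := Set.not_subset.mp h'
        obtain ⟨U, hU, hyU, hxU⟩ := sep_zero hmx hmy
        exact ⟨U, hU, fun hiff => hxU (hiff.mpr hyU)⟩
      · obtain ⟨m, hmy, hmx⟩ := Set.not_subset.mp h'
        obtain ⟨U, hU, hxU, hyU⟩ := sep_zero hmy hmx
        exact ⟨U, hU, fun hiff => hyU (hiff.mp hxU)⟩
  | succ k ih =>
      intro x y h
      rw [simN] at h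
      rcases not_and_or.mp h with h' | h'
      · push_neg at h'
        obtain ⟨z, hxz, hz⟩ := h'
        obtain ⟨U, hU, hxU, hyU⟩ := sep_step k ih x y z hxz hz
        exact ⟨U, hU, fun hiff => hxU (hiff.mpr hyU)⟩
      · push_neg at h'
        obtain ⟨w, hyw, hw⟩ := h'
        have hw' : ∀ u, x ≤ u → ¬ simN k w u := by
          intro u hxu hs
          exact hw u hxu (simN_symm k w u hs)
        obtain ⟨U, hU, hyU, hxU⟩ := sep_step k ih y x w hyw hw'
        exact ⟨U, hU, fun hiff => hyU (hiff.mp hxU)⟩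

end Aux

/-- in a finite poset, `x ∼∞ y` iff `x` and `y` belong to the same
members of the Heyting closure of the regular upsets. -/
theorem stmt9 {F : Type*} [Fintype F] [PartialOrder F] (x y : F) :
    simInf x y ↔ ∀ U : Set F, HClos (regUps F) U → (x ∈ U ↔ y ∈ U) := by
  constructor
  · intro hs U hU
    exact hclos_inv hU x y hs
  · intro h n
    by_contra hn
    obtain ⟨U, hU, hsep⟩ := sep n x y hn
    exact hsep (h U hU)
end
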